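/- arXiv:1005.0751 — 8 statements merged into one kernel-verified Lean document; each statement's English description precedes it below -/
import Mathlib

section
/- There exist an open neighborhood N of x₀ in ℝ^n and a Fréchet differentiable function φ : N → ℝ^m such that φ(x₀) = y₀ and F(φ(x), x) = 0 for all x ∈ N. (Here D₁F(y₀, x₀) is only assumed surjective, not invertible, so this is a modified implicit function theorem.) -/
open Filter Topology Set

/-!
Composing with a continuous right inverse `B` of `D₁F(y₀, x₀)` (which exists in finite dimension)
turns the problem into a classical one: `(x, z) ↦ F (y₀ + B z, x)` has invertible partial derivative
`D₁F(y₀, x₀) ∘ B = id` in `z`, so the usual implicit function theorem yields a `C¹` solution `z = ψ x`,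
and `φ x = y₀ + B (ψ x)` solves `F (φ x, x) = 0`.
-/

/-- The partial Fréchet derivative of `F` with respect to the first variable,
evaluated at `(y, x)`. -/
noncomputable def D1 {E X P : Type*}
    [NormedAddCommGroup E] [NormedSpace ℝ E]
    [NormedAddCommGroup X] [NormedSpace ℝ X]
    [NormedAddCommGroup P] [NormedSpace ℝ P]
    (F : E × X → P) (y : E) (x : X) : E →L[ℝ] P :=
  fderiv ℝ (fun y' => F (y', x)) y

section

variable {𝕜 : Type*} [RCLike 𝕜]
  {E : Type*} [NormedAddCommGroup E] [NormedSpace 𝕜 E]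
  {X : Type*} [NormedAddCommGroup X] [NormedSpace 𝕜 X]
  {P : Type*} [NormedAddCommGroup P] [NormedSpace 𝕜 P]

theorem HasFDerivAt.fderiv_prodMk_left {f : E × X → P} {f' : E × X →L[𝕜] P} {y : E} {x : X}
    (hf : HasFDerivAt f f' (y, x)) :
    fderiv 𝕜 (fun y' => f (y', x)) y = f' ∘L .inl 𝕜 E X :=
  (hf.comp y (hasFDerivAt_prodMk_left y x)).fderiv

theorem ContDiffAt.exists_implicitFunction_of_rightInverse
    [CompleteSpace E] [CompleteSpace X] [CompleteSpace P] {n : WithTop ℕ∞}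
    {f : E × X → P} {y₀ : E} {x₀ : X} (hf : ContDiffAt 𝕜 n f (y₀, x₀)) (hn : n ≠ 0)
    (B : P →L[𝕜] E) (hB : fderiv 𝕜 (fun y => f (y, x₀)) y₀ ∘L B = .id 𝕜 P) :
    ∃ φ : X → E, φ x₀ = y₀ ∧ ContDiffAt 𝕜 n φ x₀ ∧
      ∀ᶠ x in 𝓝 x₀, f (φ x, x) = f (y₀, x₀) := by
  set f' := fderiv 𝕜 f (y₀, x₀)
  have hf' : HasFDerivAt f f' (y₀, x₀) := (hf.differentiableAt hn).hasFDerivAt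
  set L : X × P →L[𝕜] E × X := (B ∘L .snd 𝕜 X P).prod (.fst 𝕜 X P)
  set T : X × P → E × X := fun q => (y₀, 0) + L q
  have hT0 : T (x₀, 0) = (y₀, x₀) := by simp [T, L]
  have hT : HasFDerivAt T L (x₀, 0) := L.hasFDerivAt.const_add (y₀, 0)
  have hg : ContDiffAt 𝕜 n (f ∘ T) (x₀, 0) := by
    refine ContDiffAt.comp (x₀, 0) (hT0 ▸ hf) ?_
    fun_prop
  have hinv : (fderiv 𝕜 (f ∘ T) (x₀, 0) ∘L .inr 𝕜 X P).IsInvertible := by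
    have hLB : (f' ∘L L) ∘L .inr 𝕜 X P = (f' ∘L .inl 𝕜 E X) ∘L B := by ext; simp [L]
    rw [((hT0 ▸ hf' : HasFDerivAt f f' (T (x₀, 0))).comp (x₀, 0) hT).fderiv, hLB,
      ← hf'.fderiv_prodMk_left, hB]
    exact ⟨.refl 𝕜 P, rfl⟩
  have hψ₀ := hg.implicitFunction_apply_self hn hinv
  have hψC := hg.contDiffAt_implicitFunction hn hinv
  refine ⟨fun x => y₀ + B (hg.implicitFunction hn hinv x), by simp [hψ₀], by fun_prop, ?_⟩
  simpa [T, L, hT0] using hg.eventually_apply_implicitFunction hn hinv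

end

/-- Modified implicit function theorem: if `D₁F(y₀,x₀)` is merely surjective, there is an
open neighborhood `N` of `x₀` and a Fréchet differentiable `φ : N → ℝᵐ` with `φ x₀ = y₀`
and `F (φ x, x) = 0` on `N`. -/
theorem stmt_0 {E X P : Type*}
    [NormedAddCommGroup E] [NormedSpace ℝ E] [FiniteDimensional ℝ E]
    [NormedAddCommGroup X] [NormedSpace ℝ X] [FiniteDimensional ℝ X]
    [NormedAddCommGroup P] [NormedSpace ℝ P] [FiniteDimensional ℝ P]
    (D : Set (E × X)) (hD : IsOpen D) (y₀ : E) (x₀ : X) (hmem : (y₀, x₀) ∈ D)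
    (F : E × X → P) (hF : ContDiffOn ℝ 1 F D) (hF0 : F (y₀, x₀) = 0)
    (hsurj : Function.Surjective (D1 F y₀ x₀)) :
    ∃ N : Set X, IsOpen N ∧ x₀ ∈ N ∧ ∃ φ : X → E,
      φ x₀ = y₀ ∧ DifferentiableOn ℝ φ N ∧
      ∀ x ∈ N, (φ x, x) ∈ D ∧ F (φ x, x) = 0 := by
  have hFC : ContDiffAt ℝ 1 F (y₀, x₀) := hF.contDiffAt (hD.mem_nhds hmem)
  obtain ⟨B, hB⟩ := (D1 F y₀ x₀).exists_rightInverse_of_surjective (LinearMap.range_eq_top.2 hsurj)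
  obtain ⟨φ, hφ₀, hφC, hφF⟩ := hFC.exists_implicitFunction_of_rightInverse one_ne_zero B hB
  have hφD : ∀ᶠ x in 𝓝 x₀, (φ x, x) ∈ D :=
    (hφC.continuousAt.prodMk continuousAt_id).eventually_mem (hD.mem_nhds (by simpa [hφ₀]))
  have hφdiff : ∀ᶠ x in 𝓝 x₀, DifferentiableAt ℝ φ x :=
    (hφC.eventually (by simp)).mono fun x hx => hx.differentiableAt one_ne_zero
  obtain ⟨N, hN, hNo, hx₀N⟩ := eventually_nhds_iff.1 (hφdiff.and (hφD.and hφF))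
  exact ⟨N, hNo, hx₀N, φ, hφ₀, fun x hx => (hN x hx).1.differentiableWithinAt,
    fun x hx => ⟨(hN x hx).2.1, (hN x hx).2.2.trans hF0⟩⟩
end

section
/- There exist a constant L > 0 and a neighborhood N of x₀ such that for every x ∈ N the set {y : (y, x) ∈ D and F(y, x) = 0} is nonempty, the minimum μ_F(x) = min{‖y − y₀‖ : F(y, x) = 0} is attained, and μ_F(x) ≤ L·‖x − x₀‖. -/
/-!
Choose a continuous right inverse `R` of the surjection `D₁F(y₀, x₀)` (it exists in finite
dimension). Then `(x, p) ↦ F (y₀ + R p, x)` has invertible partial derivative in `p`, so the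
implicit function theorem gives a differentiable `ψ` with `ψ x₀ = 0` and
`F (y₀ + R (ψ x), x) = 0` near `x₀`; differentiability at `x₀` makes `‖R (ψ x)‖ = O(‖x - x₀‖)`.
This solution lies in a fixed closed ball around `y₀` on which the zero set of `F (·, x)` is
compact, so the distance to `y₀` attains its minimum there, and that minimum is the global one.
-/

open Filter Topology Set

open Metric

theorem HasStrictFDerivAt.exists_pos_eventually_exists_norm_sub_le {𝕜 E X P : Type*}
    [NontriviallyNormedField 𝕜]
    [NormedAddCommGroup E] [NormedSpace 𝕜 E]
    [NormedAddCommGroup X] [NormedSpace 𝕜 X] [CompleteSpace X]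
    [NormedAddCommGroup P] [NormedSpace 𝕜 P] [CompleteSpace P]
    {F : E × X → P} {F' : E × X →L[𝕜] P} {y₀ : E} {x₀ : X}
    (hF : HasStrictFDerivAt F F' (y₀, x₀)) (hR : (F' ∘L .inl 𝕜 E X).HasRightInverse) :
    ∃ L > 0, ∀ᶠ x in 𝓝 x₀, ∃ y, F (y, x) = F (y₀, x₀) ∧ ‖y - y₀‖ ≤ L * ‖x - x₀‖ := by
  obtain ⟨R, hR⟩ := hR
  set M : X × P →L[𝕜] E × X := (R ∘L .snd 𝕜 X P).prod (.fst 𝕜 X P)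
  have hM : HasStrictFDerivAt (fun v : X × P => (y₀, 0) + M v) M (x₀, 0) :=
    M.hasStrictFDerivAt.const_add _
  have hG : HasStrictFDerivAt (fun v : X × P => F ((y₀, 0) + M v)) (F' ∘L M) (x₀, 0) := by
    refine HasStrictFDerivAt.comp (x₀, 0) ?_ hM
    simpa [M] using hF
  have hinv : (F' ∘L M ∘L .inr 𝕜 X P).IsInvertible :=
    ⟨.refl 𝕜 P, ContinuousLinearMap.ext fun p => (hR p).symm⟩
  have hψ₀ : hG.implicitFunctionOfProdDomain hinv x₀ = 0 :=
    (hG.eventually_apply_eq_iff_implicitFunctionOfProdDomain hinv).self_of_nhds.mp rfl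
  obtain ⟨L, hL, hbound⟩ := (R.hasFDerivAt.comp x₀
    (hG.hasStrictFDerivAt_implicitFunctionOfProdDomain hinv).hasFDerivAt).isBigO_sub.exists_pos
  refine ⟨L, hL, ?_⟩
  filter_upwards [hG.eventually_apply_implicitFunctionOfProdDomain hinv, hbound.bound]
    with x hsol hx
  refine ⟨y₀ + R (hG.implicitFunctionOfProdDomain hinv x), ?_, ?_⟩
  · simpa [M] using hsol
  · simpa [hψ₀] using hx

theorem exists_isMinOn_dist_of_isClosed_closedBall_inter {α : Type*} [PseudoMetricSpace α]
    [ProperSpace α] {Z : Set α} {y₀ y : α} {r : ℝ} (hZ : IsClosed (closedBall y₀ r ∩ Z))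
    (hy : y ∈ Z) (hyr : dist y y₀ ≤ r) :
    ∃ z ∈ Z, IsMinOn (dist · y₀) Z z := by
  obtain ⟨z, ⟨-, hzZ⟩, hmin⟩ := ((isCompact_closedBall y₀ r).of_isClosed_subset hZ
    inter_subset_left).exists_isMinOn ⟨y, mem_closedBall.mpr hyr, hy⟩
    (continuous_dist.comp₂ continuous_id continuous_const).continuousOn
  refine ⟨z, hzZ, fun w hw => ?_⟩
  by_cases hwr : dist w y₀ ≤ r
  · exact hmin ⟨mem_closedBall.mpr hwr, hw⟩
  · have hzy := isMinOn_iff.mp hmin y ⟨mem_closedBall.mpr hyr, hy⟩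
    exact (hzy.trans hyr).trans (not_le.mp hwr).le

theorem ContinuousOn.exists_isLeast_norm_sub_of_closedBall_prod_subset {E X P : Type*}
    [NormedAddCommGroup E] [ProperSpace E] [TopologicalSpace X] [TopologicalSpace P]
    [T1Space P] [Zero P] {D : Set (E × X)} {F : E × X → P} (hF : ContinuousOn F D)
    {y₀ y : E} {x : X} {r : ℝ} (hball : closedBall y₀ r ×ˢ {x} ⊆ D)
    (hy : F (y, x) = 0) (hyr : ‖y - y₀‖ ≤ r) :
    ∃ μ, IsLeast {ρ : ℝ | ∃ y : E, (y, x) ∈ D ∧ F (y, x) = 0 ∧ ρ = ‖y - y₀‖} μ ∧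
      μ ≤ ‖y - y₀‖ := by
  set Z := {y : E | (y, x) ∈ D ∧ F (y, x) = 0}
  have hsection : closedBall y₀ r ∩ Z = closedBall y₀ r ∩ (fun y => F (y, x)) ⁻¹' {0} :=
    ext fun w => ⟨fun ⟨hw, _, hF⟩ => ⟨hw, hF⟩, fun ⟨hw, hF⟩ => ⟨hw, hball ⟨hw, rfl⟩, hF⟩⟩
  have hZ : IsClosed (closedBall y₀ r ∩ Z) := by
    rw [hsection]
    refine ContinuousOn.preimage_isClosed_of_isClosed ?_ isClosed_closedBall isClosed_singleton
    exact hF.comp (continuous_id.prodMk continuous_const).continuousOn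
      fun w hw => hball ⟨hw, rfl⟩
  have hyr' : dist y y₀ ≤ r := by rwa [dist_eq_norm]
  have hyZ : y ∈ Z := ⟨hball ⟨mem_closedBall.mpr hyr', rfl⟩, hy⟩
  obtain ⟨z, ⟨hzD, hzF⟩, hmin⟩ := exists_isMinOn_dist_of_isClosed_closedBall_inter hZ hyZ hyr'
  refine ⟨‖z - y₀‖, ⟨⟨z, hzD, hzF, rfl⟩, ?_⟩, ?_⟩
  · rintro _ ⟨w, hwD, hwF, rfl⟩
    simpa only [dist_eq_norm] using isMinOn_iff.mp hmin w ⟨hwD, hwF⟩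
  · simpa only [dist_eq_norm] using isMinOn_iff.mp hmin y hyZ

theorem D1_eq_comp_inl {E X P : Type*}
    [NormedAddCommGroup E] [NormedSpace ℝ E]
    [NormedAddCommGroup X] [NormedSpace ℝ X]
    [NormedAddCommGroup P] [NormedSpace ℝ P]
    {F : E × X → P} {F' : E × X →L[ℝ] P} {y : E} {x : X} (hF : HasFDerivAt F F' (y, x)) :
    D1 F y x = F' ∘L .inl ℝ E X :=
  (hF.comp y (hasFDerivAt_prodMk_left y x)).fderiv

/-- Existence and Lipschitz bound for the minimal-perturbation value
`μ_F(x) = min {‖y − y₀‖ : (y,x) ∈ D, F(y,x) = 0}` near `x₀`. -/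
theorem stmt_1 {E X P : Type*}
    [NormedAddCommGroup E] [NormedSpace ℝ E] [FiniteDimensional ℝ E]
    [NormedAddCommGroup X] [NormedSpace ℝ X] [FiniteDimensional ℝ X]
    [NormedAddCommGroup P] [NormedSpace ℝ P] [FiniteDimensional ℝ P]
    (D : Set (E × X)) (hD : IsOpen D) (y₀ : E) (x₀ : X) (hmem : (y₀, x₀) ∈ D)
    (F : E × X → P) (hF : ContDiffOn ℝ 1 F D) (hF0 : F (y₀, x₀) = 0)
    (hsurj : Function.Surjective (D1 F y₀ x₀)) :
    ∃ L > (0 : ℝ), ∃ N ∈ 𝓝 x₀, ∀ x ∈ N, ∃ μ : ℝ,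
      IsLeast {r : ℝ | ∃ y : E, (y, x) ∈ D ∧ F (y, x) = 0 ∧ r = ‖y - y₀‖} μ ∧
      μ ≤ L * ‖x - x₀‖ := by
  have hF' : HasStrictFDerivAt F (fderiv ℝ F (y₀, x₀)) (y₀, x₀) :=
    (hF.contDiffAt (hD.mem_nhds hmem)).hasStrictFDerivAt one_ne_zero
  rw [D1_eq_comp_inl hF'.hasFDerivAt] at hsurj
  obtain ⟨L, hL, hsol⟩ := hF'.exists_pos_eventually_exists_norm_sub_le
    (.of_surjective_of_finiteDimensional hsurj)
  obtain ⟨r, hr, hball⟩ := nhds_basis_closedBall.mem_iff.mp (hD.mem_nhds hmem)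
  refine ⟨L, hL, eventually_iff_exists_mem.mp ?_⟩
  filter_upwards [hsol, ball_mem_nhds x₀ (div_pos hr hL), closedBall_mem_nhds x₀ hr]
    with x ⟨y, hy, hyL⟩ hxL hxr
  have hyr : ‖y - y₀‖ ≤ r := by
    rw [mem_ball, dist_eq_norm, lt_div_iff₀' hL] at hxL
    exact hyL.trans hxL.le
  have hsub : closedBall y₀ r ×ˢ {x} ⊆ D := by
    rw [← closedBall_prod_same] at hball
    exact (prod_mono_right (singleton_subset_iff.mpr hxr)).trans hball
  obtain ⟨μ, hμ, hμy⟩ :=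
    hF.continuousOn.exists_isLeast_norm_sub_of_closedBall_prod_subset hsub (hy.trans hF0) hyr
  exact ⟨μ, hμ, hμy.trans hyL⟩
end

section
/- For each i ∈ {1, 2, 3} there exist a constant L_i > 0 and a neighborhood N_i of x₀ such that for every x ∈ N_i the minimum μ_i(x) = min{‖y − y₀‖ : Fⁱ(y, x) = 0} exists and is attained, and μ_i(x) ≤ L_i·‖x − x₀‖; moreover, for any real-valued function f defined near x₀, if f is asymptotically equal to μ_i at x₀, then f is differentially equivalent to μ_i at x₀. -/
open Filter Topology Set

/-- The partial Fréchet derivative of `F` with respect to the second variable. -/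
noncomputable def D2 {E X P : Type*}
    [NormedAddCommGroup E] [NormedSpace ℝ E]
    [NormedAddCommGroup X] [NormedSpace ℝ X]
    [NormedAddCommGroup P] [NormedSpace ℝ P]
    (F : E × X → P) (y : E) (x : X) : X →L[ℝ] P :=
  fderiv ℝ (fun x' => F (y, x')) x

/-- Asymptotic equality at `x₀`. -/
def AsympEq {X : Type*} [TopologicalSpace X] (x₀ : X) (f g : X → ℝ) : Prop :=
  ∀ ε > (0 : ℝ), ∃ N ∈ 𝓝 x₀, ∀ x ∈ N, (1 - ε) * g x ≤ f x ∧ f x ≤ (1 + ε) * g x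

/-- Differential equivalence at `x₀`. -/
def DiffEquiv {X : Type*} [NormedAddCommGroup X] (x₀ : X) (f g : X → ℝ) : Prop :=
  Tendsto (fun x => |f x - g x| / ‖x - x₀‖) (𝓝[≠] x₀) (𝓝 0)

/-- The conclusion of the statement for a given linearization `G`: there are `L > 0`, a
neighborhood `N` of `x₀`, and a value function `μ` such that for `x ∈ N` the minimum
`μ(x) = min {‖y − y₀‖ : G y x = 0}` is attained and `μ(x) ≤ L·‖x − x₀‖`, and any `f`
asymptotically equal to `μ` at `x₀` is differentially equivalent to `μ` at `x₀`. -/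
def GoodValue {E X P : Type*}
    [NormedAddCommGroup E] [NormedSpace ℝ E]
    [NormedAddCommGroup X] [NormedSpace ℝ X]
    [NormedAddCommGroup P] [NormedSpace ℝ P]
    (x₀ : X) (y₀ : E) (G : E → X → P) : Prop :=
  ∃ L > (0 : ℝ), ∃ N ∈ 𝓝 x₀, ∃ μ : X → ℝ,
    (∀ x ∈ N, IsLeast {r : ℝ | ∃ y : E, G y x = 0 ∧ r = ‖y - y₀‖} (μ x) ∧
      μ x ≤ L * ‖x - x₀‖) ∧
    ∀ f : X → ℝ, AsympEq x₀ f μ → DiffEquiv x₀ f μ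

/-!
The three linearizations share the form `Fⁱ(y, x) = Tᵢ(x) (y - y₀) + cᵢ(x)` with `Tᵢ` continuous at
`x₀`, `Tᵢ(x₀) = D₁F(y₀, x₀)` surjective and `cᵢ(x) = O(‖x - x₀‖)`. Composing with a fixed right
inverse `R` of `D₁F(y₀, x₀)`, the maps `Tᵢ(x) ∘ R` stay invertible near `x₀` with inverses of
norm `≤ 2`, so `Tᵢ(x) e = -cᵢ(x)` has a solution with `‖e‖ ≤ C ‖cᵢ(x)‖ ≤ L ‖x - x₀‖`. The zero
set is closed and nonempty in a finite-dimensional space, so the minimum `μᵢ(x)` is attained and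
`μᵢ(x) ≤ L ‖x - x₀‖`. Finally, asymptotic equality says `f - μᵢ = o(μᵢ)`, hence
`f - μᵢ = o(‖x - x₀‖)`, which is differential equivalence.
-/

open Metric Asymptotics
open scoped Ring

section Preimage

variable {X E P : Type*} [TopologicalSpace X]
  [NormedAddCommGroup E] [NormedSpace ℝ E]
  [NormedAddCommGroup P] [NormedSpace ℝ P] [CompleteSpace P]

theorem eventually_exists_preimage_norm_le {T : X → E →L[ℝ] P} {x₀ : X}
    (hT : ContinuousAt T x₀) {R : P →L[ℝ] E} (hR : (T x₀).comp R = ContinuousLinearMap.id ℝ P) :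
    ∃ C > 0, ∀ᶠ x in 𝓝 x₀, ∀ p, ∃ e, T x e = p ∧ ‖e‖ ≤ C * ‖p‖ := by
  set S : X → P →L[ℝ] P := fun x => (T x).comp R
  have hS : ContinuousAt S x₀ := hT.clm_comp continuousAt_const
  have hS₀ : S x₀ = ((1 : (P →L[ℝ] P)ˣ) : P →L[ℝ] P) := hR
  have hunit : ∀ᶠ x in 𝓝 x₀, IsUnit (S x) :=
    hS (Units.isOpen.mem_nhds (hS₀ ▸ (1 : (P →L[ℝ] P)ˣ).isUnit))
  have hinv : ∀ᶠ x in 𝓝 x₀, ‖(S x)⁻¹ʳ‖ < 2 := by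
    have hlim := ((NormedRing.inverse_continuousAt 1).tendsto.comp (hS₀ ▸ hS.tendsto)).norm
    refine hlim.eventually_lt_const ?_
    rw [Units.val_one, Ring.inverse_one]
    exact (ContinuousLinearMap.norm_id_le).trans_lt one_lt_two
  refine ⟨2 * ‖R‖ + 1, by positivity, ?_⟩
  filter_upwards [hunit, hinv] with x hxu hxi p
  refine ⟨R ((S x)⁻¹ʳ p), ?_, ?_⟩
  · change (S x * (S x)⁻¹ʳ) p = p
    rw [Ring.mul_inverse_cancel _ hxu, one_apply_eq_self]
  · calc ‖R ((S x)⁻¹ʳ p)‖ ≤ ‖R‖ * (‖(S x)⁻¹ʳ‖ * ‖p‖) :=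
          R.le_opNorm_of_le ((S x)⁻¹ʳ.le_opNorm p)
      _ ≤ ‖R‖ * (2 * ‖p‖) := by gcongr
      _ ≤ (2 * ‖R‖ + 1) * ‖p‖ := by nlinarith [norm_nonneg p]

end Preimage

theorem IsClosed.isLeast_infDist {E : Type*} [NormedAddCommGroup E] [ProperSpace E] {s : Set E}
    (hs : IsClosed s) (hne : s.Nonempty) (y₀ : E) :
    IsLeast {r | ∃ y ∈ s, r = ‖y - y₀‖} (infDist y₀ s) := by
  obtain ⟨y, hy, hdist⟩ := hs.exists_infDist_eq_dist hne y₀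
  refine ⟨⟨y, hy, by rw [hdist, dist_comm, dist_eq_norm]⟩, ?_⟩
  rintro r ⟨z, hz, rfl⟩
  rw [← dist_eq_norm, dist_comm]
  exact infDist_le_dist_of_mem hz

theorem isLeast_infDist_affine_zeroSet {E P : Type*}
    [NormedAddCommGroup E] [NormedSpace ℝ E] [FiniteDimensional ℝ E]
    [NormedAddCommGroup P] [NormedSpace ℝ P] {T : E →L[ℝ] P} {C : ℝ}
    (hT : ∀ p, ∃ e, T e = p ∧ ‖e‖ ≤ C * ‖p‖) (c : P) (y₀ : E) :
    IsLeast {r | ∃ y, T (y - y₀) + c = 0 ∧ r = ‖y - y₀‖} (infDist y₀ {y | T (y - y₀) + c = 0}) ∧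
      infDist y₀ {y | T (y - y₀) + c = 0} ≤ C * ‖c‖ := by
  obtain ⟨e, he, he_le⟩ := hT (-c)
  have hmem : y₀ + e ∈ {y | T (y - y₀) + c = 0} := by simp [he]
  have hclosed : IsClosed {y | T (y - y₀) + c = 0} :=
    isClosed_eq (by fun_prop) continuous_const
  refine ⟨hclosed.isLeast_infDist ⟨_, hmem⟩ y₀, ?_⟩
  calc infDist y₀ {y | T (y - y₀) + c = 0} ≤ dist y₀ (y₀ + e) := infDist_le_dist_of_mem hmem
    _ = ‖e‖ := by rw [dist_comm, dist_eq_norm, add_sub_cancel_left]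
    _ ≤ C * ‖c‖ := by rwa [norm_neg] at he_le

theorem AsympEq.isLittleO {X : Type*} [TopologicalSpace X] {x₀ : X} {f g : X → ℝ}
    (h : AsympEq x₀ f g) : (fun x => f x - g x) =o[𝓝 x₀] g := by
  refine IsLittleO.of_bound fun ε hε => ?_
  obtain ⟨N, hN, hfg⟩ := h ε hε
  filter_upwards [hN] with x hx
  obtain ⟨hlow, hhigh⟩ := hfg x hx
  rw [Real.norm_eq_abs, Real.norm_eq_abs, abs_sub_le_iff]
  constructor <;> nlinarith [le_abs_self (g x)]

theorem AsympEq.diffEquiv {X : Type*} [NormedAddCommGroup X] {x₀ : X} {f g : X → ℝ}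
    (h : AsympEq x₀ f g) (hg : g =O[𝓝 x₀] (· - x₀)) : DiffEquiv x₀ f g :=
  ((h.isLittleO.trans_isBigO hg).norm_left.norm_right.tendsto_div_nhds_zero).mono_left
    nhdsWithin_le_nhds

theorem goodValue_of_affine {X E P : Type*}
    [NormedAddCommGroup X] [NormedSpace ℝ X]
    [NormedAddCommGroup E] [NormedSpace ℝ E] [FiniteDimensional ℝ E]
    [NormedAddCommGroup P] [NormedSpace ℝ P]
    {x₀ : X} (y₀ : E) {T : X → E →L[ℝ] P} {c : X → P} {C : ℝ} (hC : 0 < C)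
    (hT : ∀ᶠ x in 𝓝 x₀, ∀ p, ∃ e, T x e = p ∧ ‖e‖ ≤ C * ‖p‖) (hc : c =O[𝓝 x₀] (· - x₀)) :
    GoodValue x₀ y₀ (fun y x => T x (y - y₀) + c x) := by
  obtain ⟨K, hK, hcK⟩ := hc.exists_pos
  set μ : X → ℝ := fun x => infDist y₀ {y | T x (y - y₀) + c x = 0}
  have hμ : ∀ᶠ x in 𝓝 x₀, IsLeast {r | ∃ y, T x (y - y₀) + c x = 0 ∧ r = ‖y - y₀‖} (μ x) ∧
      μ x ≤ C * K * ‖x - x₀‖ := by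
    filter_upwards [hT, hcK.bound] with x hTx hcx
    obtain ⟨hleast, hle⟩ := isLeast_infDist_affine_zeroSet hTx (c x) y₀
    exact ⟨hleast, hle.trans (by rw [mul_assoc]; gcongr)⟩
  refine ⟨C * K, by positivity, _, hμ, μ, fun x hx => hx, fun f hf => hf.diffEquiv ?_⟩
  refine IsBigO.of_bound (C * K) (hμ.mono fun x hx => ?_)
  rw [Real.norm_eq_abs, abs_of_nonneg infDist_nonneg]
  exact hx.2

section PartialDerivative

variable {E X P : Type*}
  [NormedAddCommGroup E] [NormedSpace ℝ E]
  [NormedAddCommGroup X] [NormedSpace ℝ X]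
  [NormedAddCommGroup P] [NormedSpace ℝ P]

theorem D1_eq_fderiv_comp_inl {F : E × X → P} {y : E} {x : X} (hF : DifferentiableAt ℝ F (y, x)) :
    D1 F y x = (fderiv ℝ F (y, x)).comp (ContinuousLinearMap.inl ℝ E X) :=
  (hF.hasFDerivAt.comp y (hasFDerivAt_prodMk_left y x)).fderiv

theorem ContDiffOn.continuousAt_D1 {D : Set (E × X)} (hD : IsOpen D) {F : E × X → P}
    (hF : ContDiffOn ℝ 1 F D) {y₀ : E} {x₀ : X} (hmem : (y₀, x₀) ∈ D) :
    ContinuousAt (D1 F y₀) x₀ := by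
  have hslice : ContinuousAt (fun x : X => (y₀, x)) x₀ := by fun_prop
  have hDx : ∀ᶠ x in 𝓝 x₀, (y₀, x) ∈ D := hslice (hD.mem_nhds hmem)
  have hfderiv : ContinuousAt (fun x => fderiv ℝ F (y₀, x)) x₀ :=
    ((hF.continuousOn_fderiv_of_isOpen hD le_rfl).continuousAt (hD.mem_nhds hmem)).comp hslice
  refine (hfderiv.clm_comp (continuousAt_const (y := ContinuousLinearMap.inl ℝ E X))).congr
    (hDx.mono fun x hx => ?_)
  exact (D1_eq_fderiv_comp_inl ((hF.differentiableOn one_ne_zero).differentiableAt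
    (hD.mem_nhds hx))).symm

end PartialDerivative

theorem stmt_3_general {E X P : Type*}
    [NormedAddCommGroup E] [NormedSpace ℝ E] [FiniteDimensional ℝ E]
    [NormedAddCommGroup X] [NormedSpace ℝ X]
    [NormedAddCommGroup P] [NormedSpace ℝ P] [FiniteDimensional ℝ P]
    (D : Set (E × X)) (hD : IsOpen D) (y₀ : E) (x₀ : X) (hmem : (y₀, x₀) ∈ D)
    (F : E × X → P) (hF : ContDiffOn ℝ 1 F D) (hF0 : F (y₀, x₀) = 0)
    (hsurj : Function.Surjective (D1 F y₀ x₀)) :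
    GoodValue x₀ y₀ (fun y x => D1 F y₀ x (y - y₀) + F (y₀, x)) ∧
    GoodValue x₀ y₀ (fun y x => D1 F y₀ x₀ (y - y₀) + F (y₀, x)) ∧
    GoodValue x₀ y₀ (fun y x => D1 F y₀ x₀ (y - y₀) + D2 F y₀ x₀ (x - x₀)) := by
  obtain ⟨R, hR⟩ := (D1 F y₀ x₀).exists_rightInverse_of_surjective
    (LinearMap.range_eq_top.2 hsurj)
  obtain ⟨C, hC, hpre⟩ := eventually_exists_preimage_norm_le (hF.continuousAt_D1 hD hmem) hR
  have hpre₀ : ∀ᶠ _ in 𝓝 x₀, ∀ p, ∃ e, D1 F y₀ x₀ e = p ∧ ‖e‖ ≤ C * ‖p‖ :=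
    .of_forall fun _ => hpre.self_of_nhds
  have hslice : DifferentiableAt ℝ (fun x => F (y₀, x)) x₀ :=
    ((hF.differentiableOn one_ne_zero).differentiableAt (hD.mem_nhds hmem)).comp x₀
      (differentiableAt_const _ |>.prodMk differentiableAt_id)
  have hc : (fun x => F (y₀, x)) =O[𝓝 x₀] (· - x₀) := by
    simpa [hF0] using hslice.isBigO_sub
  exact ⟨goodValue_of_affine y₀ hC hpre hc, goodValue_of_affine y₀ hC hpre₀ hc,
    goodValue_of_affine y₀ hC hpre₀ ((D2 F y₀ x₀).isBigO_sub _ x₀)⟩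

/-- For each linearization `F¹, F², F³` of `F`, the minimal-perturbation value exists near
`x₀`, is Lipschitz-bounded there, and asymptotic equality to it implies differential
equivalence to it. -/
theorem stmt_3 {E X P : Type*}
    [NormedAddCommGroup E] [NormedSpace ℝ E] [FiniteDimensional ℝ E]
    [NormedAddCommGroup X] [NormedSpace ℝ X] [FiniteDimensional ℝ X]
    [NormedAddCommGroup P] [NormedSpace ℝ P] [FiniteDimensional ℝ P]
    (D : Set (E × X)) (hD : IsOpen D) (y₀ : E) (x₀ : X) (hmem : (y₀, x₀) ∈ D)
    (F : E × X → P) (hF : ContDiffOn ℝ 1 F D) (hF0 : F (y₀, x₀) = 0)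
    (hsurj : Function.Surjective (D1 F y₀ x₀)) :
    GoodValue x₀ y₀ (fun y x => D1 F y₀ x (y - y₀) + F (y₀, x)) ∧
    GoodValue x₀ y₀ (fun y x => D1 F y₀ x₀ (y - y₀) + F (y₀, x)) ∧
    GoodValue x₀ y₀ (fun y x => D1 F y₀ x₀ (y - y₀) + D2 F y₀ x₀ (x - x₀)) :=
  stmt_3_general D hD y₀ x₀ hmem F hF hF0 hsurj
end

section
/- For every nonzero linear map A : ℝ^m → ℝ^p, the set of real numbers c ≥ 0 such that for every u in the range of A there exists w ∈ ℝ^m with A w = u and c·‖w‖ ≤ ‖u‖ has a greatest element ‖A‖_ℓ, and ‖A‖_ℓ > 0. -/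
open Filter Topology Set

/-!
For `u` in the range of `A`, the fibre `A ⁻¹' {u}` is a closed subset of the proper space `E`,
so its distance to `0` is attained: `u` has a preimage of minimal norm. Hence a constant `c ≥ 0`
is admissible exactly when `c * infDist 0 (A ⁻¹' {u}) ≤ ‖u‖` for all such `u`, so the admissible
constants form a closed set. It is bounded above by `‖u‖ / infDist 0 (A ⁻¹' {u})` for any
`u ≠ 0`, and it contains a positive constant by the open mapping theorem applied to `A` viewed as
a surjection onto its (finite-dimensional, hence complete) range. A closed, nonempty set bounded
above contains its supremum.
-/

open Metric

def lowerBoundConstants {E P : Type*} [NormedAddCommGroup E] [NormedAddCommGroup P]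
    [NormedSpace ℝ E] [NormedSpace ℝ P] (A : E →ₗ[ℝ] P) : Set ℝ :=
  {c : ℝ | 0 ≤ c ∧ ∀ u ∈ LinearMap.range A, ∃ w : E, A w = u ∧ c * ‖w‖ ≤ ‖u‖}

namespace LinearMap

variable {E P : Type*} [NormedAddCommGroup E] [NormedSpace ℝ E] [FiniteDimensional ℝ E]
  [NormedAddCommGroup P] [NormedSpace ℝ P] (A : E →ₗ[ℝ] P)

theorem isClosed_preimage_singleton (u : P) : IsClosed (A ⁻¹' {u}) :=
  isClosed_singleton.preimage A.continuous_of_finiteDimensional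

theorem exists_apply_eq_and_mul_norm_le_iff {u : P} (hu : u ∈ range A) {c : ℝ} (hc : 0 ≤ c) :
    (∃ w, A w = u ∧ c * ‖w‖ ≤ ‖u‖) ↔ c * infDist 0 (A ⁻¹' {u}) ≤ ‖u‖ := by
  constructor
  · rintro ⟨w, hw, hcw⟩
    refine le_trans ?_ hcw
    gcongr
    simpa using infDist_le_dist_of_mem (x := (0 : E)) (show w ∈ A ⁻¹' {u} from hw)
  · intro h
    obtain ⟨w, hw, hdist⟩ := (A.isClosed_preimage_singleton u).exists_infDist_eq_dist hu 0
    exact ⟨w, hw, by simpa [hdist] using h⟩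

theorem isClosed_lowerBoundConstants : IsClosed (lowerBoundConstants A) := by
  have hS : lowerBoundConstants A =
      Ici 0 ∩ ⋂ u ∈ range A, {c | c * infDist 0 (A ⁻¹' {u}) ≤ ‖u‖} := by
    ext c
    simp only [lowerBoundConstants, mem_ofPred_eq, mem_inter_iff, mem_Ici, mem_iInter]
    exact and_congr_right fun hc =>
      forall₂_congr fun u hu => A.exists_apply_eq_and_mul_norm_le_iff hu hc
  rw [hS]
  exact isClosed_Ici.inter (isClosed_biInter fun u _ => isClosed_le (by fun_prop) continuous_const)

theorem exists_pos_mem_lowerBoundConstants : ∃ c > 0, c ∈ lowerBoundConstants A := by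
  have : CompleteSpace (range A) := FiniteDimensional.complete ℝ _
  obtain ⟨C, hC, hpre⟩ := (LinearMap.toContinuousLinearMap A.rangeRestrict).exists_preimage_norm_le
    A.surjective_rangeRestrict
  refine ⟨C⁻¹, inv_pos.2 hC, inv_nonneg.2 hC.le, fun u hu => ?_⟩
  obtain ⟨w, hw, hle⟩ := hpre ⟨u, hu⟩
  exact ⟨w, congrArg Subtype.val hw, (inv_mul_le_iff₀ hC).2 hle⟩

theorem bddAbove_lowerBoundConstants (hA : A ≠ 0) : BddAbove (lowerBoundConstants A) := by
  obtain ⟨v, hv⟩ : ∃ v, A v ≠ 0 := by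
    by_contra! h
    exact hA (ext h)
  have hpos : 0 < infDist 0 (A ⁻¹' {A v}) :=
    ((A.isClosed_preimage_singleton (A v)).notMem_iff_infDist_pos ⟨v, rfl⟩).1
      (by simpa [eq_comm] using hv)
  refine ⟨‖A v‖ / infDist 0 (A ⁻¹' {A v}), fun c ⟨hc, hcu⟩ => ?_⟩
  rw [le_div_iff₀ hpos]
  exact (A.exists_apply_eq_and_mul_norm_le_iff ⟨v, rfl⟩ hc).1 (hcu _ ⟨v, rfl⟩)

end LinearMap

theorem stmt_6_general {E P : Type*}
    [NormedAddCommGroup E] [NormedSpace ℝ E] [FiniteDimensional ℝ E]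
    [NormedAddCommGroup P] [NormedSpace ℝ P]
    (A : E →ₗ[ℝ] P) (hA : A ≠ 0) :
    ∃ ℓ : ℝ, 0 < ℓ ∧
      IsGreatest {c : ℝ | 0 ≤ c ∧ ∀ u ∈ LinearMap.range A,
        ∃ w : E, A w = u ∧ c * ‖w‖ ≤ ‖u‖} ℓ := by
  obtain ⟨c, hc, hcS⟩ := A.exists_pos_mem_lowerBoundConstants
  have hbdd := A.bddAbove_lowerBoundConstants hA
  exact ⟨sSup (lowerBoundConstants A), hc.trans_le (le_csSup hbdd hcS),
    A.isClosed_lowerBoundConstants.csSup_mem ⟨c, hcS⟩ hbdd, fun _ h => le_csSup hbdd h⟩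

/-- Existence and positivity of the matrix lower bound: for a nonzero linear map
`A : ℝᵐ → ℝᵖ`, the set of `c ≥ 0` such that every `u` in the range of `A` has a preimage
`w` with `c·‖w‖ ≤ ‖u‖` has a greatest element, and that greatest element is positive. -/
theorem stmt_6 {E P : Type*}
    [NormedAddCommGroup E] [NormedSpace ℝ E] [FiniteDimensional ℝ E]
    [NormedAddCommGroup P] [NormedSpace ℝ P] [FiniteDimensional ℝ P]
    (A : E →ₗ[ℝ] P) (hA : A ≠ 0) :
    ∃ ℓ : ℝ, 0 < ℓ ∧
      IsGreatest {c : ℝ | 0 ≤ c ∧ ∀ u ∈ LinearMap.range A,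
        ∃ w : E, A w = u ∧ c * ‖w‖ ≤ ‖u‖} ℓ :=
  stmt_6_general A hA
end

section
/- The matrix lower bound A ↦ ‖A‖_ℓ is a continuous function on the open set of p × m matrices of full rank (rank equal to min(m, p)). -/
/-!
A full-rank map is injective or surjective. In either case a preimage bound `c` of `A` gives the
preimage bound `c - ‖A - B‖` of `B`: for injective `A` by the triangle inequality, for surjective
`A` because `B` approximates `A` with constant `‖A - B‖`, so the quantitative surjectivity theorem
for maps approximating a linear map applies. Hence `‖A‖_ℓ - ‖A - B‖ ≤ ‖B‖_ℓ`, i.e. the lower bound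
is `1`-Lipschitz on full-rank maps.
-/

open Set Function Module

theorem LinearMap.injective_or_surjective_of_finrank_range_eq_min {K V W : Type*} [DivisionRing K]
    [AddCommGroup V] [Module K V] [FiniteDimensional K V]
    [AddCommGroup W] [Module K W] [FiniteDimensional K W] {f : V →ₗ[K] W}
    (hf : finrank K (LinearMap.range f) = min (finrank K V) (finrank K W)) :
    Injective f ∨ Surjective f := by
  rcases le_total (finrank K V) (finrank K W) with h | h
  · rw [min_eq_left h] at hf
    left
    rw [← LinearMap.ker_eq_bot, ← Submodule.finrank_eq_zero]
    have := f.finrank_range_add_finrank_ker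
    omega
  · rw [min_eq_right h] at hf
    exact .inr <| LinearMap.range_eq_top.1 (Submodule.eq_top_of_finrank_eq hf)

namespace ContinuousLinearMap

variable {𝕜 E F : Type*} [NontriviallyNormedField 𝕜]
  [NormedAddCommGroup E] [NormedSpace 𝕜 E] [NormedAddCommGroup F] [NormedSpace 𝕜 F]

/-- `‖A‖_ℓ` is the greatest element of this set. -/
def preimageNormBounds (A : E →L[𝕜] F) : Set ℝ :=
  {c | 0 ≤ c ∧ ∀ u ∈ LinearMap.range (A : E →ₗ[𝕜] F), ∃ w, A w = u ∧ c * ‖w‖ ≤ ‖u‖}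

theorem mul_norm_le_norm_apply_of_mem_preimageNormBounds {A : E →L[𝕜] F} (hA : Injective A)
    {c : ℝ} (hc : c ∈ A.preimageNormBounds) (w : E) : c * ‖w‖ ≤ ‖A w‖ := by
  obtain ⟨w', hw', hle⟩ := hc.2 (A w) ⟨w, rfl⟩
  rwa [hA hw'] at hle

theorem sub_opNorm_mul_norm_le_norm_apply {A : E →L[𝕜] F} {c : ℝ}
    (hA : ∀ w, c * ‖w‖ ≤ ‖A w‖) (B : E →L[𝕜] F) (w : E) :
    (c - ‖A - B‖) * ‖w‖ ≤ ‖B w‖ :=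
  calc (c - ‖A - B‖) * ‖w‖ ≤ ‖A w‖ - ‖(A - B) w‖ := by
        linarith [hA w, (A - B).le_opNorm w]
    _ ≤ ‖B w‖ := by simpa using norm_sub_norm_le (A w) ((A - B) w)

theorem exists_preimage_sub_opNorm_mul_norm_le [CompleteSpace E] {A B : E →L[𝕜] F} {c : ℝ}
    (hc : 0 < c) (hA : ∀ v, ∃ w, A w = v ∧ c * ‖w‖ ≤ ‖v‖) (hAB : ‖A - B‖ < c) (v : F) :
    ∃ w, B w = v ∧ (c - ‖A - B‖) * ‖w‖ ≤ ‖v‖ := by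
  choose g hAg hg using hA
  let Ainv : A.NonlinearRightInverse :=
    { toFun := g
      nnnorm := ⟨c⁻¹, by positivity⟩
      bound' := fun v ↦ by
        change ‖g v‖ ≤ c⁻¹ * ‖v‖
        rw [← div_eq_inv_mul, le_div_iff₀ hc, mul_comm]
        exact hg v
      right_inv' := hAg }
  have hBA : ApproximatesLinearOn B A univ ‖B - A‖₊ :=
    ApproximatesLinearOn.approximatesLinearOn_iff_lipschitzOnWith.2 (by
      simpa only [← FunLike.coe_sub] using (B - A).lipschitz.lipschitzOnWith)
  have hδ : 0 < c - ‖A - B‖ := sub_pos.2 hAB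
  obtain ⟨w, hw, hBw⟩ := hBA.surjOn_closedBall_of_nonlinearRightInverse Ainv
    (ε := ‖v‖ / (c - ‖A - B‖)) (b := 0) (by positivity) (subset_univ _)
    (show v ∈ Metric.closedBall (B 0) _ by
      simp only [Ainv, map_zero, Metric.mem_closedBall, dist_zero_right]
      change ‖v‖ ≤ (c⁻¹⁻¹ - ‖B - A‖) * _
      rw [inv_inv, norm_sub_rev, mul_div_cancel₀ _ hδ.ne'])
  refine ⟨w, hBw, ?_⟩
  rw [mem_closedBall_zero_iff, le_div_iff₀ hδ] at hw
  linarith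

theorem sub_opNorm_mem_preimageNormBounds [CompleteSpace E] {A : E →L[𝕜] F}
    (hA : Injective A ∨ Surjective A) {c : ℝ} (hc : c ∈ A.preimageNormBounds) (B : E →L[𝕜] F)
    (hAB : ‖A - B‖ < c) : c - ‖A - B‖ ∈ B.preimageNormBounds := by
  refine ⟨sub_nonneg.2 hAB.le, ?_⟩
  rcases hA with hA | hA
  · rintro _ ⟨w, rfl⟩
    exact ⟨w, rfl, sub_opNorm_mul_norm_le_norm_apply
      (mul_norm_le_norm_apply_of_mem_preimageNormBounds hA hc) B w⟩
  · rintro u -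
    exact exists_preimage_sub_opNorm_mul_norm_le ((norm_nonneg _).trans_lt hAB)
      (fun v ↦ hc.2 v (hA v)) hAB u

theorem sub_opNorm_le_of_isGreatest_preimageNormBounds [CompleteSpace E] {A B : E →L[𝕜] F}
    (hA : Injective A ∨ Surjective A) {a b : ℝ} (ha : IsGreatest A.preimageNormBounds a)
    (hb : IsGreatest B.preimageNormBounds b) : a - ‖A - B‖ ≤ b := by
  rcases le_or_gt a ‖A - B‖ with h | h
  · linarith [hb.1.1]
  · exact hb.2 (sub_opNorm_mem_preimageNormBounds hA ha.1 B h)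

end ContinuousLinearMap

/-- The matrix lower bound is continuous on the open set of full-rank matrices: if `lb`
assigns to each continuous linear map `A : ℝᵐ → ℝᵖ` of full rank the greatest `c ≥ 0` such
that every `u` in the range of `A` has a preimage `w` with `c·‖w‖ ≤ ‖u‖`, then `lb` is
continuous on the set of full-rank maps (with the operator-norm topology). -/
theorem stmt_7 {E P : Type*}
    [NormedAddCommGroup E] [NormedSpace ℝ E] [FiniteDimensional ℝ E]
    [NormedAddCommGroup P] [NormedSpace ℝ P] [FiniteDimensional ℝ P]
    (lb : (E →L[ℝ] P) → ℝ)
    (hlb : ∀ A : E →L[ℝ] P,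
      Module.finrank ℝ (LinearMap.range (A : E →ₗ[ℝ] P))
        = min (Module.finrank ℝ E) (Module.finrank ℝ P) →
      IsGreatest {c : ℝ | 0 ≤ c ∧ ∀ u ∈ LinearMap.range (A : E →ₗ[ℝ] P),
        ∃ w : E, A w = u ∧ c * ‖w‖ ≤ ‖u‖} (lb A)) :
    ContinuousOn lb {A : E →L[ℝ] P |
      Module.finrank ℝ (LinearMap.range (A : E →ₗ[ℝ] P))
        = min (Module.finrank ℝ E) (Module.finrank ℝ P)} := by
  refine (LipschitzOnWith.of_le_add fun A hA B hB ↦ ?_).continuousOn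
  have hle := ContinuousLinearMap.sub_opNorm_le_of_isGreatest_preimageNormBounds
    (LinearMap.injective_or_surjective_of_finrank_range_eq_min hA) (hlb A hA) (hlb B hB)
  rw [dist_eq_norm]
  linarith
end

section
/- Let T : ℝ^m → ℝ^p be a linear map, y₀ ∈ ℝ^m, and h ∈ ℝ^p. The minimization problem min{‖y − y₀‖ : y ∈ ℝ^m, T y = h} is well defined (feasible with attained minimum) if and only if h lies in the range of T, if and only if the maximization problem max{g(T y₀ − h) : g ∈ (ℝ^p)*, ‖T* g‖ ≤ 1} is well defined (the objective is bounded above and the maximum attained); and when h is in the range of T, the two optimal values are equal. -/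
open Set Metric

/-!
Fix `y₁` with `T y₁ = h` and put `x = y₀ - y₁`. The feasible points are `y₁ + ker T`, so the
primal value is the distance from `x` to `ker T`, attained because `E` is proper. In finite
dimension the functionals `g ∘ T` are exactly the functionals vanishing on `ker T`, so the dual
value is `sup {φ x : ‖φ‖ ≤ 1, ker T ≤ ker φ}`. This is the same distance: `φ x = φ (x - k)` bounds
it from above, and Hahn–Banach applied to the class of `x` in `E ⧸ ker T`, whose norm is that
distance, attains it. If `h ∉ range T`, a functional vanishing on `range T` but not at `h` makes
every real number a dual objective value.
-/

theorem IsClosed.isLeast_dist_image_infDist {α : Type*} [PseudoMetricSpace α] [ProperSpace α]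
    {s : Set α} (hs : IsClosed s) (hne : s.Nonempty) (x : α) :
    IsLeast (dist x '' s) (infDist x s) := by
  obtain ⟨y, hy, hxy⟩ := hs.exists_infDist_eq_dist hne x
  exact ⟨⟨y, hy, hxy.symm⟩, by rintro _ ⟨z, hz, rfl⟩; exact infDist_le_dist_of_mem hz⟩

theorem Submodule.isGreatest_dual_infDist {E : Type*} [NormedAddCommGroup E] [NormedSpace ℝ E]
    (K : Submodule ℝ E) [IsClosed (K : Set E)] (x : E) :
    IsGreatest {r | ∃ φ : StrongDual ℝ E, ‖φ‖ ≤ 1 ∧ K ≤ LinearMap.ker (φ : E →ₗ[ℝ] ℝ) ∧ r = φ x}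
      (infDist x K) := by
  constructor
  · obtain ⟨f, hf, hfx⟩ := exists_dual_vector'' ℝ (K.mkQ x)
    refine ⟨f.comp K.mkQL, ?_, fun k hk ↦ ?_, ?_⟩
    · refine ContinuousLinearMap.opNorm_le_bound _ zero_le_one fun y ↦ ?_
      calc ‖f (K.mkQ y)‖ ≤ ‖f‖ * ‖K.mkQ y‖ := f.le_opNorm _
        _ ≤ 1 * ‖y‖ :=
          mul_le_mul hf (Submodule.Quotient.norm_mk_le K y) (norm_nonneg _) zero_le_one
    · simp [(Submodule.Quotient.mk_eq_zero K).2 hk]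
    · have hnorm : ‖K.mkQ x‖ = infDist x K :=
        QuotientAddGroup.norm_mk (S := K.toAddSubgroup) x
      exact (hfx.trans hnorm).symm
  · rintro _ ⟨φ, hφ, hKφ, rfl⟩
    refine (le_infDist ⟨0, K.zero_mem⟩).2 fun k hk ↦ ?_
    have hφk : φ k = 0 := hKφ hk
    calc φ x = φ (x - k) := by rw [map_sub, hφk, sub_zero]
      _ ≤ ‖φ‖ * ‖x - k‖ := (le_abs_self _).trans (φ.le_opNorm _)
      _ ≤ dist x k := by rw [dist_eq_norm]; exact mul_le_of_le_one_left (norm_nonneg _) hφ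

theorem ContinuousLinearMap.exists_comp_eq_of_ker_le {𝕜 E P : Type*} [NontriviallyNormedField 𝕜]
    [CompleteSpace 𝕜] [AddCommGroup E] [Module 𝕜 E] [TopologicalSpace E]
    [NormedAddCommGroup P] [NormedSpace 𝕜 P] [FiniteDimensional 𝕜 P]
    (T : E →L[𝕜] P) (φ : E →L[𝕜] 𝕜)
    (hker : LinearMap.ker (T : E →ₗ[𝕜] P) ≤ LinearMap.ker (φ : E →ₗ[𝕜] 𝕜)) :
    ∃ g : P →L[𝕜] 𝕜, g.comp T = φ := by
  have : (φ : E →ₗ[𝕜] 𝕜) ∈ LinearMap.range (T : E →ₗ[𝕜] P).dualMap := by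
    rw [LinearMap.range_dualMap_eq_dualAnnihilator_ker, Submodule.mem_dualAnnihilator]
    exact fun w hw ↦ hker hw
  obtain ⟨g, hg⟩ := this
  exact ⟨LinearMap.toContinuousLinearMap g, ContinuousLinearMap.coe_injective hg⟩

section BestApproximation

variable {E P : Type*} [NormedAddCommGroup E] [NormedSpace ℝ E]
  [NormedAddCommGroup P] [NormedSpace ℝ P] (T : E →L[ℝ] P) (y₀ : E)

def primalValues (h : P) : Set ℝ := {r | ∃ y : E, T y = h ∧ r = ‖y - y₀‖}

def dualValues (h : P) : Set ℝ := {r | ∃ g : P →L[ℝ] ℝ, ‖g.comp T‖ ≤ 1 ∧ r = g (T y₀ - h)}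

variable {h : P}

theorem primalValues_eq_image {y₁ : E} (hy₁ : T y₁ = h) :
    primalValues T y₀ h = dist (y₀ - y₁) '' (LinearMap.ker (T : E →ₗ[ℝ] P) : Set E) := by
  ext r
  constructor
  · rintro ⟨y, hy, rfl⟩
    refine ⟨y - y₁, by simp [hy, hy₁], ?_⟩
    rw [dist_eq_norm, ← norm_neg]
    abel_nf
  · rintro ⟨k, hk, rfl⟩
    refine ⟨y₁ + k, by simp_all, ?_⟩
    rw [dist_eq_norm, ← norm_neg]
    abel_nf

theorem isLeast_primalValues [FiniteDimensional ℝ E] {y₁ : E} (hy₁ : T y₁ = h) :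
    IsLeast (primalValues T y₀ h)
      (infDist (y₀ - y₁) (LinearMap.ker (T : E →ₗ[ℝ] P))) := by
  rw [primalValues_eq_image T y₀ hy₁]
  exact (LinearMap.ker (T : E →ₗ[ℝ] P)).closed_of_finiteDimensional.isLeast_dist_image_infDist
    ⟨0, Submodule.zero_mem _⟩ _

variable [FiniteDimensional ℝ P]

theorem dualValues_eq {y₁ : E} (hy₁ : T y₁ = h) :
    dualValues T y₀ h =
      {r | ∃ φ : StrongDual ℝ E, ‖φ‖ ≤ 1 ∧
        LinearMap.ker (T : E →ₗ[ℝ] P) ≤ LinearMap.ker (φ : E →ₗ[ℝ] ℝ) ∧ r = φ (y₀ - y₁)} := by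
  ext r
  constructor
  · rintro ⟨g, hg, rfl⟩
    exact ⟨g.comp T, hg, fun k hk ↦ by simp_all, by simp [hy₁]⟩
  · rintro ⟨φ, hφ, hker, rfl⟩
    obtain ⟨g, rfl⟩ := T.exists_comp_eq_of_ker_le φ hker
    exact ⟨g, hφ, by simp [hy₁]⟩

theorem dualValues_eq_univ_of_notMem_range (hh : h ∉ range T) :
    dualValues T y₀ h = univ := by
  obtain ⟨ψ, hψh, hψT⟩ :=
    Submodule.exists_le_ker_of_notMem (p := LinearMap.range (T : E →ₗ[ℝ] P)) hh
  have hψTy : ∀ y, ψ (T y) = 0 := fun y ↦ hψT ⟨y, rfl⟩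
  refine eq_univ_of_forall fun r ↦ ⟨(-r / ψ h) • LinearMap.toContinuousLinearMap ψ, ?_, ?_⟩
  · have : ((-r / ψ h) • LinearMap.toContinuousLinearMap ψ).comp T = 0 := by
      ext y
      simp [hψTy]
    simp [this]
  · simp [hψTy, hψh]

theorem isGreatest_dualValues [FiniteDimensional ℝ E] {y₁ : E} (hy₁ : T y₁ = h) :
    IsGreatest (dualValues T y₀ h)
      (infDist (y₀ - y₁) (LinearMap.ker (T : E →ₗ[ℝ] P))) := by
  have := (LinearMap.ker (T : E →ₗ[ℝ] P)).closed_of_finiteDimensional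
  rw [dualValues_eq T y₀ hy₁]
  exact Submodule.isGreatest_dual_infDist _ _

end BestApproximation

/-- Duality for constrained best approximation: for a linear map `T : ℝᵐ → ℝᵖ`, `y₀ ∈ ℝᵐ`
and `h ∈ ℝᵖ`, the minimization `min {‖y − y₀‖ : T y = h}` is well defined iff
`h ∈ range T`, iff the maximization `max {g (T y₀ − h) : ‖T* g‖ ≤ 1}` is well defined;
and when `h ∈ range T` the two optimal values coincide. -/
theorem stmt_14 {E P : Type*}
    [NormedAddCommGroup E] [NormedSpace ℝ E] [FiniteDimensional ℝ E]
    [NormedAddCommGroup P] [NormedSpace ℝ P] [FiniteDimensional ℝ P]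
    (T : E →L[ℝ] P) (y₀ : E) (h : P) :
    ((∃ μ : ℝ, IsLeast {r : ℝ | ∃ y : E, T y = h ∧ r = ‖y - y₀‖} μ) ↔
      h ∈ Set.range T) ∧
    ((∃ ν : ℝ, IsGreatest
        {r : ℝ | ∃ g : P →L[ℝ] ℝ, ‖g.comp T‖ ≤ 1 ∧ r = g (T y₀ - h)} ν) ↔
      h ∈ Set.range T) ∧
    (h ∈ Set.range T → ∀ μ ν : ℝ,
      IsLeast {r : ℝ | ∃ y : E, T y = h ∧ r = ‖y - y₀‖} μ →
      IsGreatest {r : ℝ | ∃ g : P →L[ℝ] ℝ, ‖g.comp T‖ ≤ 1 ∧ r = g (T y₀ - h)} ν →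
      μ = ν) := by
  have hoptimal (hh : h ∈ range T) :
      ∃ d, IsLeast (primalValues T y₀ h) d ∧ IsGreatest (dualValues T y₀ h) d := by
    obtain ⟨y₁, hy₁⟩ := hh
    exact ⟨_, isLeast_primalValues T y₀ hy₁, isGreatest_dualValues T y₀ hy₁⟩
  refine ⟨⟨?_, fun hh ↦ ?_⟩, ⟨?_, fun hh ↦ ?_⟩, fun hh μ ν hμ hν ↦ ?_⟩
  · rintro ⟨μ, ⟨y, hy, -⟩, -⟩
    exact ⟨y, hy⟩
  · obtain ⟨d, hd, -⟩ := hoptimal hh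
    exact ⟨d, hd⟩
  · rintro ⟨ν, -, hν⟩
    by_contra hh
    have hbdd : BddAbove (dualValues T y₀ h) := ⟨ν, hν⟩
    rw [dualValues_eq_univ_of_notMem_range T y₀ hh] at hbdd
    exact not_bddAbove_univ hbdd
  · obtain ⟨d, -, hd⟩ := hoptimal hh
    exact ⟨d, hd⟩
  · obtain ⟨d, hμd, hνd⟩ := hoptimal hh
    exact (hμ.unique hμd).trans (hνd.unique hν)
end

section
/- (Third equivalence, differential form) There is a neighborhood of x₀ on which both μ₂ᵐᵃˣ(x) = max{f(F(y₀, x)) : f ∈ (ℝ^p)*, ‖D₁F(y₀, x₀)* f‖ ≤ 1} and μ₃ᵐᵃˣ(x) = max{f(D₂F(y₀, x₀)(x − x₀)) : f ∈ (ℝ^p)*, ‖D₁F(y₀, x₀)* f‖ ≤ 1} are well defined, and μ₂ᵐᵃˣ and μ₃ᵐᵃˣ are differentially equivalent at x₀, i.e. |μ₂ᵐᵃˣ(x) − μ₃ᵐᵃˣ(x)|/‖x − x₀‖ → 0 as x → x₀. -/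
/-!
Let `K` be the set of functionals `f` with `‖f ∘ D₁F(y₀, x₀)‖ ≤ 1`. Since `D₁F(y₀, x₀)` is
surjective, `f ↦ f ∘ D₁F(y₀, x₀)` is injective, so `K` is the preimage of a compact ball under a
closed embedding and is compact. Hence both maxima exist everywhere, and they are the values of
the support function `μ v = max_{f ∈ K} f v` at `F(y₀, x)` and at `D₂F(y₀, x₀)(x − x₀)`.
As `K` is bounded, `μ` is Lipschitz, so `μ₂ − μ₃` is dominated by
`‖F(y₀, x) − D₂F(y₀, x₀)(x − x₀)‖ = o(‖x − x₀‖)`.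
-/

open Filter Topology Set

open Asymptotics

theorem isCompact_setOf_norm_comp_le {E P : Type*}
    [NormedAddCommGroup E] [NormedSpace ℝ E] [FiniteDimensional ℝ E]
    [NormedAddCommGroup P] [NormedSpace ℝ P] [FiniteDimensional ℝ P]
    {T : E →L[ℝ] P} (hT : Function.Surjective T) (r : ℝ) :
    IsCompact {f : StrongDual ℝ P | ‖f.comp T‖ ≤ r} := by
  let C : StrongDual ℝ P →L[ℝ] StrongDual ℝ E := (ContinuousLinearMap.compL ℝ E P ℝ).flip T
  have hC : Function.Injective C := fun f g hfg ↦ by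
    ext p
    obtain ⟨e, rfl⟩ := hT p
    exact DFunLike.congr_fun hfg e
  have hemb := C.toLinearMap.isClosedEmbedding_of_injective (LinearMap.ker_eq_bot.mpr hC)
  simpa [Metric.closedBall, C] using hemb.isCompact_preimage (isCompact_closedBall 0 r)

section SupportFunction

variable {P : Type*} [NormedAddCommGroup P] [NormedSpace ℝ P]

noncomputable def supportFunction (K : Set (StrongDual ℝ P)) (v : P) : ℝ :=
  sSup {r | ∃ f ∈ K, r = f v}

theorem isGreatest_supportFunction {K : Set (StrongDual ℝ P)} (hK : IsCompact K)
    (hne : K.Nonempty) (v : P) :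
    IsGreatest {r | ∃ f ∈ K, r = f v} (supportFunction K v) := by
  have hset : {r | ∃ f ∈ K, r = f v} = (fun f : StrongDual ℝ P ↦ f v) '' K := by
    ext r
    simp only [mem_ofPred_eq, mem_image, eq_comm]
  unfold supportFunction
  rw [hset]
  exact (hK.image (ContinuousLinearMap.apply ℝ ℝ v).continuous).isGreatest_sSup (hne.image _)

theorem lipschitzWith_supportFunction {K : Set (StrongDual ℝ P)} (hne : K.Nonempty) {R : ℝ}
    (hR : ∀ f ∈ K, ‖f‖ ≤ R) :
    LipschitzWith R.toNNReal (supportFunction K) := by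
  have hbdd : ∀ w : P, BddAbove {r | ∃ f ∈ K, r = f w} := fun w ↦
    ⟨R * ‖w‖, by
      rintro r ⟨f, hf, rfl⟩
      exact (le_abs_self _).trans <|
        (f.le_opNorm w).trans (mul_le_mul_of_nonneg_right (hR f hf) (norm_nonneg w))⟩
  refine LipschitzWith.of_le_add_mul' R fun v w ↦ ?_
  obtain ⟨f₀, hf₀⟩ := hne
  refine csSup_le ⟨f₀ v, f₀, hf₀, rfl⟩ ?_
  rintro r ⟨f, hf, rfl⟩
  have hfw : f w ≤ supportFunction K w := le_csSup (hbdd w) ⟨f, hf, rfl⟩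
  have hdiff : f v - f w ≤ R * dist v w := calc
    f v - f w = f (v - w) := (map_sub f v w).symm
    _ ≤ ‖f‖ * ‖v - w‖ := (le_abs_self _).trans (f.le_opNorm _)
    _ ≤ R * dist v w := by
      rw [dist_eq_norm]
      exact mul_le_mul_of_nonneg_right (hR f hf) (norm_nonneg _)
  linarith

end SupportFunction

theorem diffEquiv_of_isLittleO {X : Type*} [NormedAddCommGroup X] {x₀ : X} {f g : X → ℝ}
    (h : (fun x ↦ f x - g x) =o[𝓝 x₀] fun x ↦ x - x₀) : DiffEquiv x₀ f g := by
  have := h.norm_norm.tendsto_div_nhds_zero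
  simp only [Real.norm_eq_abs] at this
  exact this.mono_left nhdsWithin_le_nhds

theorem LipschitzWith.diffEquiv_comp {X P : Type*} [NormedAddCommGroup X]
    [NormedAddCommGroup P] {μ : P → ℝ} {C : NNReal} (hμ : LipschitzWith C μ) {x₀ : X}
    {g h : X → P} (hgh : (fun x ↦ g x - h x) =o[𝓝 x₀] fun x ↦ x - x₀) :
    DiffEquiv x₀ (μ ∘ g) (μ ∘ h) := by
  refine diffEquiv_of_isLittleO (IsBigO.trans_isLittleO ?_ hgh)
  exact IsBigO.of_bound C (Eventually.of_forall fun x ↦ hμ.norm_sub_le (g x) (h x))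

theorem stmt_17_general {E X P : Type*}
    [NormedAddCommGroup E] [NormedSpace ℝ E] [FiniteDimensional ℝ E]
    [NormedAddCommGroup X] [NormedSpace ℝ X]
    [NormedAddCommGroup P] [NormedSpace ℝ P] [FiniteDimensional ℝ P]
    (D : Set (E × X)) (hD : IsOpen D) (y₀ : E) (x₀ : X) (hmem : (y₀, x₀) ∈ D)
    (F : E × X → P) (hF : ContDiffOn ℝ 1 F D) (hF0 : F (y₀, x₀) = 0)
    (hsurj : Function.Surjective (D1 F y₀ x₀)) :
    ∃ N ∈ 𝓝 x₀, ∃ μ₂ μ₃ : X → ℝ,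
      (∀ x ∈ N,
        IsGreatest {r : ℝ | ∃ f : P →L[ℝ] ℝ,
          ‖f.comp (D1 F y₀ x₀)‖ ≤ 1 ∧ r = f (F (y₀, x))} (μ₂ x) ∧
        IsGreatest {r : ℝ | ∃ f : P →L[ℝ] ℝ,
          ‖f.comp (D1 F y₀ x₀)‖ ≤ 1 ∧ r = f (D2 F y₀ x₀ (x - x₀))} (μ₃ x)) ∧
      DiffEquiv x₀ μ₂ μ₃ := by
  set K := {f : StrongDual ℝ P | ‖f.comp (D1 F y₀ x₀)‖ ≤ 1}
  have hK : IsCompact K := isCompact_setOf_norm_comp_le hsurj 1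
  have hne : K.Nonempty := ⟨0, by simp [K]⟩
  obtain ⟨R, hR⟩ := hK.isBounded.exists_norm_le
  have hF' : HasFDerivAt (fun x ↦ F (y₀, x)) (D2 F y₀ x₀) x₀ :=
    (((hF.contDiffAt (hD.mem_nhds hmem)).differentiableAt one_ne_zero).comp x₀
      ((differentiableAt_const y₀).prodMk differentiableAt_id)).hasFDerivAt
  refine ⟨univ, univ_mem, supportFunction K ∘ fun x ↦ F (y₀, x),
    supportFunction K ∘ fun x ↦ D2 F y₀ x₀ (x - x₀),
    fun x _ ↦ ⟨isGreatest_supportFunction hK hne _, isGreatest_supportFunction hK hne _⟩, ?_⟩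
  refine (lipschitzWith_supportFunction hne hR).diffEquiv_comp ?_
  simpa only [hF0, sub_zero] using hF'.isLittleO

/-- Third equivalence, differential form: on a neighborhood of `x₀` the dual values
`μ₂ᵐᵃˣ(x) = max {f(F(y₀,x)) : ‖D₁F(y₀,x₀)* f‖ ≤ 1}` and
`μ₃ᵐᵃˣ(x) = max {f(D₂F(y₀,x₀)(x − x₀)) : ‖D₁F(y₀,x₀)* f‖ ≤ 1}` are well defined,
and they are differentially equivalent at `x₀`. -/
theorem stmt_17 {E X P : Type*}
    [NormedAddCommGroup E] [NormedSpace ℝ E] [FiniteDimensional ℝ E]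
    [NormedAddCommGroup X] [NormedSpace ℝ X] [FiniteDimensional ℝ X]
    [NormedAddCommGroup P] [NormedSpace ℝ P] [FiniteDimensional ℝ P]
    (D : Set (E × X)) (hD : IsOpen D) (y₀ : E) (x₀ : X) (hmem : (y₀, x₀) ∈ D)
    (F : E × X → P) (hF : ContDiffOn ℝ 1 F D) (hF0 : F (y₀, x₀) = 0)
    (hsurj : Function.Surjective (D1 F y₀ x₀)) :
    ∃ N ∈ 𝓝 x₀, ∃ μ₂ μ₃ : X → ℝ,
      (∀ x ∈ N,
        IsGreatest {r : ℝ | ∃ f : P →L[ℝ] ℝ,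
          ‖f.comp (D1 F y₀ x₀)‖ ≤ 1 ∧ r = f (F (y₀, x))} (μ₂ x) ∧
        IsGreatest {r : ℝ | ∃ f : P →L[ℝ] ℝ,
          ‖f.comp (D1 F y₀ x₀)‖ ≤ 1 ∧ r = f (D2 F y₀ x₀ (x - x₀))} (μ₃ x)) ∧
      DiffEquiv x₀ μ₂ μ₃ :=
  stmt_17_general D hD y₀ x₀ hmem F hF hF0 hsurj
end

section
/- (Third equivalence, asymptotic form) If in addition the linear map D₂F(y₀, x₀) : ℝ^n → ℝ^p is injective, then μ₂ᵐᵃˣ(x) = max{f(F(y₀, x)) : f ∈ (ℝ^p)*, ‖D₁F(y₀, x₀)* f‖ ≤ 1} and μ₃ᵐᵃˣ(x) = max{f(D₂F(y₀, x₀)(x − x₀)) : f ∈ (ℝ^p)*, ‖D₁F(y₀, x₀)* f‖ ≤ 1} are asymptotically equal at x₀. -/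
open Filter Topology Set

/-!
Both `μ₂` and `μ₃` are the support function `dualMax A` of the constraint set
`{f | ‖A* f‖ ≤ 1}`, `A = D₁F(y₀, x₀)`, evaluated at `F (y₀, x)` and at its linearization
`B (x - x₀)`, `B = D₂F(y₀, x₀)`. Surjectivity of `A` makes `A*` injective, so the constraint set
is compact: the maxima are attained, `dualMax A` is Lipschitz, and it dominates a multiple of
the norm because the constraint set contains a ball. Injectivity of `B` makes the linearization
error `o(‖B (x - x₀)‖)`, hence `o(dualMax A (B (x - x₀)))`.
-/

open scoped NNReal

theorem asympEq_of_isLittleO {X : Type*} [TopologicalSpace X] {x₀ : X} {f g : X → ℝ}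
    (hg : ∀ x, 0 ≤ g x) (hfg : (fun x => f x - g x) =o[𝓝 x₀] g) : AsympEq x₀ f g := by
  intro ε hε
  refine ⟨_, Asymptotics.isLittleO_iff.mp hfg hε, fun x (hx : ‖f x - g x‖ ≤ ε * ‖g x‖) => ?_⟩
  rw [Real.norm_eq_abs, Real.norm_of_nonneg (hg x), abs_le] at hx
  constructor <;> linarith [hx.1, hx.2]

theorem asympEq_comp_of_isLittleO {X P : Type*} [TopologicalSpace X] [NormedAddCommGroup P]
    {N : P → ℝ} {K : ℝ≥0} {c : ℝ} (hN : LipschitzWith K N) (hc : 0 < c)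
    (hlow : ∀ v, c * ‖v‖ ≤ N v) {x₀ : X} {g h : X → P}
    (hgh : (fun x => g x - h x) =o[𝓝 x₀] h) :
    AsympEq x₀ (fun x => N (g x)) (fun x => N (h x)) := by
  have hN0 : ∀ v, 0 ≤ N v := fun v => (by positivity : 0 ≤ c * ‖v‖).trans (hlow v)
  refine asympEq_of_isLittleO (fun x => hN0 _) ?_
  have hdiff : (fun x => N (g x) - N (h x)) =O[𝓝 x₀] fun x => g x - h x :=
    .of_bound K (.of_forall fun x => by
      simpa only [← dist_eq_norm] using hN.dist_le_mul (g x) (h x))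
  have hh : h =O[𝓝 x₀] fun x => N (h x) :=
    .of_bound c⁻¹ (.of_forall fun x => by
      rw [Real.norm_of_nonneg (hN0 _), le_inv_mul_iff₀ hc]
      exact hlow _)
  exact hdiff.trans_isLittleO (hgh.trans_isBigO hh)

namespace ContinuousLinearMap

variable {V W : Type*} [NormedAddCommGroup V] [NormedSpace ℝ V] [FiniteDimensional ℝ V]
  [NormedAddCommGroup W] [NormedSpace ℝ W]

theorem exists_antilipschitzWith_of_injective {T : V →L[ℝ] W} (hT : Function.Injective T) :
    ∃ K, AntilipschitzWith K T :=
  let ⟨K, _, hK⟩ := (T : V →ₗ[ℝ] W).exists_antilipschitzWith (LinearMap.ker_eq_bot.mpr hT)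
  ⟨K, hK⟩

theorem isBigO_comp_of_injective {α : Type*} (l : Filter α) {T : V →L[ℝ] W}
    (hT : Function.Injective T) (u : α → V) : u =O[l] fun a => T (u a) :=
  let ⟨K, hK⟩ := exists_antilipschitzWith_of_injective hT
  .of_bound K (.of_forall fun a => T.bound_of_antilipschitz hK (u a))

end ContinuousLinearMap

section DualBall

variable {E P : Type*} [NormedAddCommGroup E] [NormedSpace ℝ E]
  [NormedAddCommGroup P] [NormedSpace ℝ P]

def dualBall (A : E →L[ℝ] P) : Set (P →L[ℝ] ℝ) := {f | ‖f.comp A‖ ≤ 1}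

noncomputable def dualMax (A : E →L[ℝ] P) (v : P) : ℝ := sSup ((fun f => f v) '' dualBall A)

theorem closedBall_subset_dualBall (A : E →L[ℝ] P) :
    Metric.closedBall 0 (‖A‖ + 1)⁻¹ ⊆ dualBall A := fun f hf => by
  rw [mem_closedBall_zero_iff] at hf
  calc ‖f.comp A‖ ≤ ‖f‖ * ‖A‖ := f.opNorm_comp_le A
    _ ≤ (‖A‖ + 1)⁻¹ * (‖A‖ + 1) := by gcongr; linarith
    _ = 1 := inv_mul_cancel₀ (by positivity)

theorem isBounded_dualBall [FiniteDimensional ℝ P] {A : E →L[ℝ] P}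
    (hA : Function.Surjective A) : Bornology.IsBounded (dualBall A) := by
  let Astar : (P →L[ℝ] ℝ) →L[ℝ] (E →L[ℝ] ℝ) := (ContinuousLinearMap.compL ℝ E P ℝ).flip A
  have hAstar : Function.Injective Astar := fun f g hfg =>
    ContinuousLinearMap.ext <| hA.forall.2 fun e => congrArg (· e) hfg
  obtain ⟨K, hK⟩ := Astar.exists_antilipschitzWith_of_injective hAstar
  refine (hK.isBounded_preimage (Metric.isBounded_closedBall (x := 0) (r := 1))).subset ?_
  exact fun f hf => mem_closedBall_zero_iff.mpr hf

theorem isCompact_dualBall [FiniteDimensional ℝ P] {A : E →L[ℝ] P}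
    (hA : Function.Surjective A) : IsCompact (dualBall A) :=
  Metric.isCompact_of_isClosed_isBounded
    (isClosed_le (by fun_prop) continuous_const) (isBounded_dualBall hA)

theorem isGreatest_dualMax [FiniteDimensional ℝ P] {A : E →L[ℝ] P}
    (hA : Function.Surjective A) (v : P) :
    IsGreatest {r : ℝ | ∃ f : P →L[ℝ] ℝ, ‖f.comp A‖ ≤ 1 ∧ r = f v} (dualMax A v) := by
  have hset : {r : ℝ | ∃ f : P →L[ℝ] ℝ, ‖f.comp A‖ ≤ 1 ∧ r = f v} =
      (fun f => f v) '' dualBall A := by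
    ext r; simp only [mem_ofPred_eq, mem_image, dualBall, eq_comm]
  rw [hset]
  exact ((isCompact_dualBall hA).image (by fun_prop)).isGreatest_sSup
    ⟨0, 0, closedBall_subset_dualBall A (Metric.mem_closedBall_self (by positivity)), rfl⟩

theorem inv_norm_add_one_mul_norm_le_dualMax [FiniteDimensional ℝ P] {A : E →L[ℝ] P}
    (hA : Function.Surjective A) (v : P) : (‖A‖ + 1)⁻¹ * ‖v‖ ≤ dualMax A v := by
  obtain ⟨g, hg, hgv⟩ := exists_dual_vector'' ℝ v
  refine (isGreatest_dualMax hA v).2 ⟨(‖A‖ + 1)⁻¹ • g, closedBall_subset_dualBall A ?_, ?_⟩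
  · rw [mem_closedBall_zero_iff, norm_smul, Real.norm_of_nonneg (by positivity)]
    exact mul_le_of_le_one_right (by positivity) hg
  · simp [hgv]

theorem exists_lipschitzWith_dualMax [FiniteDimensional ℝ P] {A : E →L[ℝ] P}
    (hA : Function.Surjective A) : ∃ K, LipschitzWith K (dualMax A) := by
  obtain ⟨C, hC⟩ := (isBounded_dualBall hA).exists_norm_le
  refine ⟨C.toNNReal, .of_le_add_mul _ fun u v => ?_⟩
  obtain ⟨f, hf, hfu⟩ := (isGreatest_dualMax hA u).1
  have hfv : f v ≤ dualMax A v := (isGreatest_dualMax hA v).2 ⟨f, hf, rfl⟩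
  have hfC : ‖f‖ ≤ C.toNNReal := (hC f hf).trans (Real.le_coe_toNNReal C)
  calc dualMax A u = f v + f (u - v) := by rw [hfu, map_sub]; ring
    _ ≤ dualMax A v + ‖f‖ * ‖u - v‖ := add_le_add hfv ((le_abs_self _).trans (f.le_opNorm _))
    _ ≤ dualMax A v + C.toNNReal * dist u v := by rw [dist_eq_norm]; gcongr

end DualBall

theorem hasFDerivAt_D2 {E X P : Type*} [NormedAddCommGroup E] [NormedSpace ℝ E]
    [NormedAddCommGroup X] [NormedSpace ℝ X] [NormedAddCommGroup P] [NormedSpace ℝ P]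
    {F : E × X → P} {y : E} {x : X} (hF : DifferentiableAt ℝ F (y, x)) :
    HasFDerivAt (fun x' => F (y, x')) (D2 F y x) x :=
  (hF.comp x (differentiableAt_const y |>.prodMk differentiableAt_id)).hasFDerivAt

theorem stmt_18_general {E X P : Type*}
    [NormedAddCommGroup E] [NormedSpace ℝ E]
    [NormedAddCommGroup X] [NormedSpace ℝ X] [FiniteDimensional ℝ X]
    [NormedAddCommGroup P] [NormedSpace ℝ P] [FiniteDimensional ℝ P]
    (D : Set (E × X)) (hD : IsOpen D) (y₀ : E) (x₀ : X) (hmem : (y₀, x₀) ∈ D)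
    (F : E × X → P) (hF : ContDiffOn ℝ 1 F D) (hF0 : F (y₀, x₀) = 0)
    (hsurj : Function.Surjective (D1 F y₀ x₀))
    (hinj : Function.Injective (D2 F y₀ x₀)) :
    ∃ N ∈ 𝓝 x₀, ∃ μ₂ μ₃ : X → ℝ,
      (∀ x ∈ N,
        IsGreatest {r : ℝ | ∃ f : P →L[ℝ] ℝ,
          ‖f.comp (D1 F y₀ x₀)‖ ≤ 1 ∧ r = f (F (y₀, x))} (μ₂ x) ∧
        IsGreatest {r : ℝ | ∃ f : P →L[ℝ] ℝ,
          ‖f.comp (D1 F y₀ x₀)‖ ≤ 1 ∧ r = f (D2 F y₀ x₀ (x - x₀))} (μ₃ x)) ∧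
      AsympEq x₀ μ₂ μ₃ := by
  set A := D1 F y₀ x₀
  set B := D2 F y₀ x₀
  have hFd : DifferentiableAt ℝ F (y₀, x₀) :=
    (hF.contDiffAt (hD.mem_nhds hmem)).differentiableAt one_ne_zero
  have hlin : (fun x => F (y₀, x) - B (x - x₀)) =o[𝓝 x₀] fun x => B (x - x₀) := by
    have hderiv := (hasFDerivAt_D2 hFd).isLittleO
    simp only [hF0, sub_zero] at hderiv
    exact hderiv.trans_isBigO (B.isBigO_comp_of_injective _ hinj _)
  obtain ⟨K, hK⟩ := exists_lipschitzWith_dualMax hsurj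
  refine ⟨univ, univ_mem, fun x => dualMax A (F (y₀, x)), fun x => dualMax A (B (x - x₀)),
    fun x _ => ⟨isGreatest_dualMax hsurj _, isGreatest_dualMax hsurj _⟩, ?_⟩
  exact asympEq_comp_of_isLittleO hK (by positivity)
    (inv_norm_add_one_mul_norm_le_dualMax hsurj) hlin

/-- Third equivalence, asymptotic form: if additionally `D₂F(y₀,x₀)` is injective, then the
dual values `μ₂ᵐᵃˣ(x) = max {f(F(y₀,x)) : ‖D₁F(y₀,x₀)* f‖ ≤ 1}` and
`μ₃ᵐᵃˣ(x) = max {f(D₂F(y₀,x₀)(x − x₀)) : ‖D₁F(y₀,x₀)* f‖ ≤ 1}` are asymptotically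
equal at `x₀`. -/
theorem stmt_18 {E X P : Type*}
    [NormedAddCommGroup E] [NormedSpace ℝ E] [FiniteDimensional ℝ E]
    [NormedAddCommGroup X] [NormedSpace ℝ X] [FiniteDimensional ℝ X]
    [NormedAddCommGroup P] [NormedSpace ℝ P] [FiniteDimensional ℝ P]
    (D : Set (E × X)) (hD : IsOpen D) (y₀ : E) (x₀ : X) (hmem : (y₀, x₀) ∈ D)
    (F : E × X → P) (hF : ContDiffOn ℝ 1 F D) (hF0 : F (y₀, x₀) = 0)
    (hsurj : Function.Surjective (D1 F y₀ x₀))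
    (hinj : Function.Injective (D2 F y₀ x₀)) :
    ∃ N ∈ 𝓝 x₀, ∃ μ₂ μ₃ : X → ℝ,
      (∀ x ∈ N,
        IsGreatest {r : ℝ | ∃ f : P →L[ℝ] ℝ,
          ‖f.comp (D1 F y₀ x₀)‖ ≤ 1 ∧ r = f (F (y₀, x))} (μ₂ x) ∧
        IsGreatest {r : ℝ | ∃ f : P →L[ℝ] ℝ,
          ‖f.comp (D1 F y₀ x₀)‖ ≤ 1 ∧ r = f (D2 F y₀ x₀ (x - x₀))} (μ₃ x)) ∧
      AsympEq x₀ μ₂ μ₃ :=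
  stmt_18_general D hD y₀ x₀ hmem F hF hF0 hsurj hinj
end
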